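/- arXiv:1910.08733 — 3 statements merged into one kernel-verified Lean document; each statement's English description precedes it below -/
import Mathlib

section
/- Let P = [a] × [2b] with the partial order (x,y) ⪯ (z,t) iff (x,y)=(z,t), or (x<z and y<t), or (y ≤ b and t ≥ b+1 and y < t-b). Every antichain of P is contained in a path from (1, b+h) to (a, h) for some 1 ≤ h ≤ b, where steps along the path are (1,0) or (0,-1). -/
/-! Two points of an antichain never satisfy `x < z` and `y < t`, so read column by column its
points descend weakly: it lies on the staircase whose `n`-th column runs from the lowest height
reached in the columns before `n` down to the lowest height reached up to column `n`. The third
clause of the order forbids a point at height `y ≤ b` together with one above `y + b`, so all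
heights fit in a window `[h, b + h]` with `1 ≤ h ≤ b`, which fixes the two ends of the staircase. -/

/-- A step moves one unit down `(1,0)` or one unit left `(0,-1)`. -/
def Step (p q : ℤ × ℤ) : Prop := q = p + (1, 0) ∨ q = p + (0, -1)

/-- `l` is a path starting at `p` and ending at `q`, each consecutive
difference being `(1,0)` or `(0,-1)`. -/
def IsPathFromTo (l : List (ℤ × ℤ)) (p q : ℤ × ℤ) : Prop :=
  l.Chain' Step ∧ l.head? = some p ∧ l.getLast? = some q

/-- Membership in the poset `P = [a] × [2b]`, viewed inside `ℤ × ℤ`. -/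
def memP (a b : ℕ) (p : ℤ × ℤ) : Prop :=
  1 ≤ p.1 ∧ p.1 ≤ (a : ℤ) ∧ 1 ≤ p.2 ∧ p.2 ≤ 2 * (b : ℤ)

/-- The partial order on `P = [a] × [2b]`:
`(x,y) ⪯ (z,t)` iff `(x,y) = (z,t)`, or `x < z` and `y < t`,
or `y ≤ b`, `t ≥ b+1` and `y < t - b`. -/
def ple (b : ℕ) (p q : ℤ × ℤ) : Prop :=
  p = q ∨ (p.1 < q.1 ∧ p.2 < q.2) ∨
    (p.2 ≤ (b : ℤ) ∧ (b : ℤ) + 1 ≤ q.2 ∧ p.2 < q.2 - (b : ℤ))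

lemma isPathFromTo_singleton (p : ℤ × ℤ) : IsPathFromTo [p] p p :=
  ⟨List.isChain_singleton p, rfl, rfl⟩

lemma IsPathFromTo.append {l₁ l₂ : List (ℤ × ℤ)} {p q q' r : ℤ × ℤ}
    (h₁ : IsPathFromTo l₁ p q) (h₂ : IsPathFromTo l₂ q' r) (hstep : Step q q') :
    IsPathFromTo (l₁ ++ l₂) p r := by
  obtain ⟨hc₁, hp, hq⟩ := h₁
  obtain ⟨hc₂, hq', hr⟩ := h₂
  refine ⟨hc₁.append hc₂ ?_, by simp [List.head?_append, hp],
    by simp [List.getLast?_append, hr]⟩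
  simp only [hq, hq', Option.mem_def, Option.some_inj]
  rintro _ rfl _ rfl
  exact hstep

def column (p : ℤ × ℤ) : ℕ → List (ℤ × ℤ)
  | 0 => [p]
  | n + 1 => p :: column (p.1, p.2 - 1) n

lemma isPathFromTo_column (p : ℤ × ℤ) (n : ℕ) :
    IsPathFromTo (column p n) p (p.1, p.2 - n) := by
  induction n generalizing p with
  | zero => simpa [column] using isPathFromTo_singleton p
  | succ n ih =>
    have h := (isPathFromTo_singleton p).append (ih (p.1, p.2 - 1))
      (Or.inr (by ext <;> simp [sub_eq_add_neg]))
    rw [show column p (n + 1) = [p] ++ column (p.1, p.2 - 1) n from rfl]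
    convert h using 2
    push_cast
    ring

lemma mem_column {p q : ℤ × ℤ} {n : ℕ} (h1 : q.1 = p.1) (hlo : p.2 - n ≤ q.2) (hhi : q.2 ≤ p.2) :
    q ∈ column p n := by
  induction n generalizing p with
  | zero => exact List.mem_singleton.2 (Prod.ext h1 (by push_cast at hlo; omega))
  | succ n ih =>
    rcases hhi.eq_or_lt with h | h
    · exact List.mem_cons.2 (Or.inl (Prod.ext h1 h))
    · exact List.mem_cons_of_mem _ (ih h1 (by push_cast at hlo ⊢; omega) (by simp only; omega))

def staircase (F : ℕ → ℤ) : ℕ → List (ℤ × ℤ)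
  | 0 => []
  | n + 1 => staircase F n ++ column ((n : ℤ) + 1, F n) (F n - F (n + 1)).toNat

section staircase

variable {F : ℕ → ℤ}

lemma isPathFromTo_staircase (hF : Antitone F) (n : ℕ) :
    IsPathFromTo (staircase F (n + 1)) (1, F 0) ((n : ℤ) + 1, F (n + 1)) := by
  have hcol : ∀ n : ℕ, IsPathFromTo (column ((n : ℤ) + 1, F n) (F n - F (n + 1)).toNat)
      ((n : ℤ) + 1, F n) ((n : ℤ) + 1, F (n + 1)) := fun n => by
    convert isPathFromTo_column ((n : ℤ) + 1, F n) (F n - F (n + 1)).toNat using 2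
    have : F (n + 1) ≤ F n := hF (by omega)
    simp only
    omega
  induction n with
  | zero => simpa [staircase] using hcol 0
  | succ n ih =>
    refine ih.append (by exact_mod_cast hcol (n + 1)) (Or.inl ?_)
    ext <;> simp

lemma mem_staircase (hF : Antitone F) {n m : ℕ} {q : ℤ × ℤ} (hm : m < n) (h1 : q.1 = m + 1)
    (hlo : F (m + 1) ≤ q.2) (hhi : q.2 ≤ F m) : q ∈ staircase F n := by
  induction n with
  | zero => omega
  | succ n ih =>
    rw [staircase, List.mem_append]
    rcases (Nat.lt_succ_iff.1 hm).lt_or_eq with hmn | rfl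
    · exact Or.inl (ih hmn)
    · exact Or.inr (mem_column h1 (by have : F (m + 1) ≤ F m := hF (by omega); omega) hhi)

end staircase

noncomputable def lowerEnvelope (S : Set (ℤ × ℤ)) (hi : ℤ) (n : ℕ) : ℤ :=
  sInf (insert hi (Prod.snd '' {q ∈ S | q.1 ≤ n}))

section lowerEnvelope

variable {S : Set (ℤ × ℤ)} {hi lo : ℤ}

lemma bddBelow_lowerEnvelope_set (hlo : ∀ q ∈ S, lo ≤ q.2) (hlohi : lo ≤ hi) (n : ℕ) :
    BddBelow (insert hi (Prod.snd '' {q ∈ S | q.1 ≤ n})) := by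
  refine ⟨lo, ?_⟩
  rintro _ (rfl | ⟨q, ⟨hq, -⟩, rfl⟩)
  exacts [hlohi, hlo q hq]

lemma lowerEnvelope_le_hi (hlo : ∀ q ∈ S, lo ≤ q.2) (hlohi : lo ≤ hi) (n : ℕ) :
    lowerEnvelope S hi n ≤ hi :=
  csInf_le (bddBelow_lowerEnvelope_set hlo hlohi n) (Set.mem_insert _ _)

lemma lowerEnvelope_le (hlo : ∀ q ∈ S, lo ≤ q.2) (hlohi : lo ≤ hi) {n : ℕ} {q : ℤ × ℤ}
    (hq : q ∈ S) (hn : q.1 ≤ n) : lowerEnvelope S hi n ≤ q.2 :=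
  csInf_le (bddBelow_lowerEnvelope_set hlo hlohi n) (Set.mem_insert_of_mem _ ⟨q, ⟨hq, hn⟩, rfl⟩)

lemma le_lowerEnvelope {n : ℕ} {c : ℤ} (hc : c ≤ hi) (h : ∀ q ∈ S, q.1 ≤ n → c ≤ q.2) :
    c ≤ lowerEnvelope S hi n := by
  refine le_csInf (Set.insert_nonempty _ _) ?_
  rintro _ (rfl | ⟨q, ⟨hq, hn⟩, rfl⟩)
  exacts [hc, h q hq hn]

lemma lowerEnvelope_antitone (hlo : ∀ q ∈ S, lo ≤ q.2) (hlohi : lo ≤ hi) :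
    Antitone (lowerEnvelope S hi) := fun m n hmn =>
  le_lowerEnvelope (lowerEnvelope_le_hi hlo hlohi n)
    fun _ hq hm => lowerEnvelope_le hlo hlohi hq (hm.trans (by exact_mod_cast hmn))

end lowerEnvelope

theorem exists_path_covering {a : ℕ} (ha : 1 ≤ a) {lo hi : ℤ} (hlohi : lo ≤ hi)
    {S : Set (ℤ × ℤ)} (hS : ∀ p ∈ S, 1 ≤ p.1 ∧ p.1 ≤ a ∧ lo ≤ p.2 ∧ p.2 ≤ hi)
    (hSE : ∀ p ∈ S, ∀ q ∈ S, p.1 < q.1 → q.2 ≤ p.2) :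
    ∃ l, IsPathFromTo l (1, hi) (a, lo) ∧ S ⊆ {x | x ∈ l} := by
  have hlo : ∀ q ∈ S, lo ≤ q.2 := fun q hq => (hS q hq).2.2.1
  set F : ℕ → ℤ := fun n => if n < a then lowerEnvelope S hi n else lo with hF
  have hFanti : Antitone F := by
    refine antitone_nat_of_succ_le fun n => ?_
    by_cases hn : n + 1 < a
    · simp only [hF, if_pos hn, if_pos (show n < a by omega)]
      exact lowerEnvelope_antitone hlo hlohi n.le_succ
    · simp only [hF, if_neg hn]
      split_ifs
      exacts [le_lowerEnvelope hlohi fun q hq _ => hlo q hq, le_rfl]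
  have hF0 : F 0 = hi := by
    simp only [hF, if_pos (show 0 < a by omega)]
    refine le_antisymm (lowerEnvelope_le_hi hlo hlohi 0) (le_lowerEnvelope le_rfl fun q hq h0 => ?_)
    have := (hS q hq).1
    omega
  obtain ⟨a, rfl⟩ : ∃ a', a = a' + 1 := ⟨a - 1, by omega⟩
  refine ⟨staircase F (a + 1), ?_, fun p hp => ?_⟩
  · have hpath := isPathFromTo_staircase hFanti a
    rw [hF0, show F (a + 1) = lo from if_neg (lt_irrefl _)] at hpath
    exact_mod_cast hpath
  · obtain ⟨hp1, hpa, hplo, hphi⟩ := hS p hp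
    obtain ⟨m, hm⟩ : ∃ m : ℕ, p.1 = m + 1 := ⟨(p.1 - 1).toNat, by omega⟩
    refine mem_staircase hFanti (m := m) (by push_cast at hpa; omega) hm ?_ ?_
    · simp only [hF]
      split_ifs
      exacts [lowerEnvelope_le hlo hlohi hp (by push_cast; omega), hplo]
    · simp only [hF, if_pos (show m < a + 1 by push_cast at hpa; omega)]
      exact le_lowerEnvelope hphi fun q hq hqm => hSE q hq p hp (by omega)

section antichain

variable {a b : ℕ} {S : Set (ℤ × ℤ)} {p q : ℤ × ℤ}

lemma snd_le_snd_of_fst_lt (hA : IsAntichain (ple b) S) (hp : p ∈ S) (hq : q ∈ S)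
    (h : p.1 < q.1) : q.2 ≤ p.2 := by
  by_contra! hlt
  exact hA hp hq (fun hpq => by rw [hpq] at h; exact h.false) (Or.inr (Or.inl ⟨h, hlt⟩))

lemma snd_le_snd_add (hS : ∀ p ∈ S, memP a b p) (hA : IsAntichain (ple b) S) (hp : p ∈ S)
    (hq : q ∈ S) : q.2 ≤ p.2 + b := by
  obtain ⟨-, -, hp1, -⟩ := hS p hp
  obtain ⟨-, -, -, hq2⟩ := hS q hq
  by_contra! hlt
  exact hA hp hq (fun hpq => by rw [hpq] at hlt; omega)
    (Or.inr (Or.inr ⟨by omega, by omega, by omega⟩))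

end antichain

lemma exists_band {b : ℕ} (hb : 1 ≤ b) {Y : Set ℤ} (hY : ∀ y ∈ Y, 1 ≤ y ∧ y ≤ 2 * b)
    (hdiam : ∀ x ∈ Y, ∀ y ∈ Y, y ≤ x + b) :
    ∃ h : ℕ, 1 ≤ h ∧ h ≤ b ∧ ∀ y ∈ Y, h ≤ y ∧ y ≤ b + h := by
  rcases Y.eq_empty_or_nonempty with rfl | hne
  · exact ⟨1, le_rfl, hb, by simp⟩
  have hbdd : BddAbove Y := ⟨2 * b, fun y hy => (hY y hy).2⟩
  have hM := Int.csSup_mem hne hbdd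
  refine ⟨max 1 (sSup Y - b).toNat, by omega, by have := (hY _ hM).2; omega, fun y hy => ?_⟩
  have := (hY y hy).1
  have := le_csSup hbdd hy
  have := hdiam y hy _ hM
  omega

theorem stmt_7 (a b : ℕ) (ha : 2 ≤ a) (hab : a ≤ b) (S : Set (ℤ × ℤ))
    (hS : ∀ p ∈ S, memP a b p) (hA : IsAntichain (ple b) S) :
    ∃ h : ℕ, 1 ≤ h ∧ h ≤ b ∧ ∃ l : List (ℤ × ℤ),
      IsPathFromTo l (1, (b : ℤ) + (h : ℤ)) ((a : ℤ), (h : ℤ)) ∧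
      S ⊆ {x | x ∈ l} := by
  obtain ⟨h, h1, hb, hband⟩ := exists_band (b := b) (Y := Prod.snd '' S) (by omega)
    (by rintro _ ⟨p, hp, rfl⟩; exact ⟨(hS p hp).2.2.1, (hS p hp).2.2.2⟩)
    (by rintro _ ⟨p, hp, rfl⟩ _ ⟨q, hq, rfl⟩; exact snd_le_snd_add hS hA hp hq)
  have hband' : ∀ p ∈ S, (h : ℤ) ≤ p.2 ∧ p.2 ≤ b + h := fun p hp => hband p.2 ⟨p, hp, rfl⟩
  obtain ⟨l, hl, hSl⟩ := exists_path_covering (a := a) (by omega) (by omega : (h : ℤ) ≤ b + h)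
    (fun p hp => ⟨(hS p hp).1, (hS p hp).2.1, hband' p hp⟩)
    (fun p hp q hq => snd_le_snd_of_fst_lt hA hp hq)
  exact ⟨h, h1, hb, l, hl, hSl⟩
end

section
/- Let P = [a] × [2b] with the partial order described. For every t with 1 ≤ t ≤ a, there exist t pairwise disjoint maximal antichains of P (equivalently, t pairwise disjoint paths from (1, b+h_i) to (a, h_i) for distinct values h_1 < ... < h_t in [b]). -/
/-!
The paths are hooks: the one of height `h` runs along the row `y = b + h` from `x = 1` to
`x = h`, down the column `x = h` to the row `y = h`, and along that row to `x = a`. For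
`h ≤ b` the height is read off any point `(x, y)` of the hook, as `max x (y - b)` above
the row `y = b` and as `min x y` on or below it, so hooks of different heights are disjoint.
-/

lemma step_iff (p q : ℤ × ℤ) :
    Step p q ↔ (q.1 = p.1 + 1 ∧ q.2 = p.2) ∨ (q.1 = p.1 ∧ q.2 = p.2 - 1) := by
  simp only [Step, Prod.ext_iff, Prod.fst_add, Prod.snd_add, add_zero, sub_eq_add_neg]

lemma isPathFromTo_map_range {f : ℕ → ℤ × ℤ} (hf : ∀ n, Step (f n) (f (n + 1))) (n : ℕ) :
    IsPathFromTo ((List.range (n + 1)).map f) (f 0) (f n) := by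
  refine ⟨?_, ?_, ?_⟩
  · rw [List.Chain', List.isChain_map, List.isChain_range_succ]
    exact fun m _ => hf m
  · simp [List.range_succ_eq_map]
  · simp [List.range_succ]

def hookPoint (b h n : ℕ) : ℤ × ℤ :=
  if n < h then ((n : ℤ) + 1, (b : ℤ) + h)
  else if n < h + b then ((h : ℤ), (b : ℤ) + 2 * h - 1 - n)
  else ((n : ℤ) + 1 - b, (h : ℤ))

lemma hookPoint_step (b h n : ℕ) : Step (hookPoint b h n) (hookPoint b h (n + 1)) := by
  rw [step_iff]
  unfold hookPoint
  split_ifs <;> push_cast <;> omega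

lemma isPathFromTo_hook {a b h : ℕ} (h1 : 1 ≤ h) (ha : h ≤ a) :
    IsPathFromTo ((List.range (a + b)).map (hookPoint b h)) (1, (b : ℤ) + h) ((a : ℤ), (h : ℤ)) := by
  obtain ⟨n, hn⟩ : ∃ n, a + b = n + 1 := ⟨a + b - 1, by omega⟩
  have hstart : hookPoint b h 0 = (1, (b : ℤ) + h) := by
    simp only [hookPoint, if_pos (show 0 < h by omega)]; norm_num
  have hend : hookPoint b h n = ((a : ℤ), (h : ℤ)) := by
    unfold hookPoint
    split_ifs <;> simp only [Prod.mk.injEq, and_true] <;> omega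
  rw [hn, ← hstart, ← hend]
  exact isPathFromTo_map_range (hookPoint_step b h) n

lemma eq_of_hookPoint_eq {b h h' n m : ℕ} (heq : hookPoint b h n = hookPoint b h' m) :
    h = h' := by
  unfold hookPoint at heq
  split_ifs at heq <;> simp only [Prod.mk.injEq] at heq <;> omega

theorem stmt_9_general (a b t : ℕ) (hab : a ≤ b) (hta : t ≤ a) :
    ∃ h : Fin t → ℕ, StrictMono h ∧ (∀ i, 1 ≤ h i ∧ h i ≤ b) ∧
      ∃ l : Fin t → List (ℤ × ℤ),
        (∀ i, IsPathFromTo (l i) (1, (b : ℤ) + (h i : ℤ)) ((a : ℤ), (h i : ℤ))) ∧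
        (∀ i j, i ≠ j → ∀ x, x ∈ l i → x ∉ l j) := by
  have hi (i : Fin t) : (i : ℕ) + 1 ≤ a := by omega
  refine ⟨fun i => i + 1, fun i j hij => Nat.succ_lt_succ hij,
    fun i => ⟨Nat.le_add_left 1 i, (hi i).trans hab⟩,
    fun i => (List.range (a + b)).map (hookPoint b (i + 1)),
    fun i => isPathFromTo_hook (Nat.le_add_left 1 i) (hi i), ?_⟩
  rintro i j hij x hxi hxj
  obtain ⟨n, -, rfl⟩ := List.mem_map.mp hxi
  obtain ⟨m, -, hm⟩ := List.mem_map.mp hxj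
  exact hij (Fin.ext (by simpa using eq_of_hookPoint_eq hm.symm))

theorem stmt_9 (a b t : ℕ) (ha : 2 ≤ a) (hab : a ≤ b) (ht1 : 1 ≤ t) (hta : t ≤ a) :
    ∃ h : Fin t → ℕ, StrictMono h ∧ (∀ i, 1 ≤ h i ∧ h i ≤ b) ∧
      ∃ l : Fin t → List (ℤ × ℤ),
        (∀ i, IsPathFromTo (l i) (1, (b : ℤ) + (h i : ℤ)) ((a : ℤ), (h i : ℤ))) ∧
        (∀ i j, i ≠ j → ∀ x, x ∈ l i → x ∉ l j) :=
  stmt_9_general a b t hab hta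
end

section
/- Fix integers 2 ≤ a ≤ b, t ≤ a-1, and 1 ≤ h_1 < ... < h_t ≤ b. The number of t-tuples of pairwise disjoint paths (steps (1,0) or (0,-1)) where the i-th path runs from (1, b+h_i) to (a, h_i) equals det(g_{ij}) where g_{ij} = C(a+b-h_j+h_i-1, a-1). -/
/-!
The count is an instance of the Lindström–Gessel–Viennot lemma. Expanding the determinant of
the path-count matrix gives a signed count of path systems `(σ, l)`, where `l i` runs from `A i`
to `B (σ i)`. On the systems in which two paths meet, exchanging the tails of the first meeting
pair after their first common point is a sign-reversing involution, so only the systems of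
disjoint paths survive. For `A i = (1, b + h i)` and `B i = (a, h i)` with `h` increasing, a path
from `A i` to `B i'` meets every path from `A j` to `B j'` when `i < j` and `j' < i'` (follow both
paths along antidiagonals: their horizontal gap changes sign, so it vanishes), hence only `σ = 1`
admits disjoint systems. Finally, there are `C(m + k, m)` paths made of `m` right and `k` down
steps.
-/

theorem List.IsChain.apply_getElem_le {α β : Type*} [Preorder β] {R : α → α → Prop}
    {f : α → β} (hf : ∀ a b, R a b → f a ≤ f b) {l : List α} (hl : l.IsChain R)
    {i j : ℕ} (hij : i ≤ j) (hj : j < l.length) : f l[i] ≤ f l[j] := by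
  induction j, hij using Nat.le_induction with
  | base => rfl
  | succ j hij ih => exact (ih (by omega)).trans (hf _ _ (hl.getElem j hj))

namespace Step

variable {p q : ℤ × ℤ}

theorem fst_le (h : Step p q) : p.1 ≤ q.1 := by
  rcases h with rfl | rfl <;> simp

theorem snd_le (h : Step p q) : q.2 ≤ p.2 := by
  rcases h with rfl | rfl <;> simp

theorem fst_sub_snd (h : Step p q) : q.1 - q.2 = p.1 - p.2 + 1 := by
  rcases h with rfl | rfl <;> simp <;> ring

theorem fst_le_add_one (h : Step p q) : q.1 ≤ p.1 + 1 := by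
  rcases h with rfl | rfl <;> simp

end Step

namespace IsPathFromTo

variable {l : List (ℤ × ℤ)} {p q : ℤ × ℤ}

theorem length_pos (hl : IsPathFromTo l p q) : 0 < l.length := by
  obtain ⟨-, h, -⟩ := hl
  cases l <;> simp_all

theorem getElem_zero (hl : IsPathFromTo l p q) : l[0]'hl.length_pos = p := by
  have h := hl.2.1
  rw [List.head?_eq_getElem?, List.getElem?_eq_getElem hl.length_pos] at h
  exact Option.some_injective _ h

theorem getElem_length_sub_one (hl : IsPathFromTo l p q) :
    l[l.length - 1]'(Nat.sub_one_lt_of_lt hl.length_pos) = q := by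
  have := hl.2.2
  rw [List.getLast?_eq_getElem?, List.getElem?_eq_getElem (Nat.sub_one_lt_of_lt hl.length_pos)]
    at this
  exact Option.some_injective _ this

theorem fst_sub_snd_getElem (hl : IsPathFromTo l p q) (k : ℕ) (hk : k < l.length) :
    l[k].1 - l[k].2 = p.1 - p.2 + k := by
  induction k with
  | zero => simp [hl.getElem_zero]
  | succ k ih =>
    rw [(hl.1.getElem k hk).fst_sub_snd, ih (by omega)]
    push_cast
    ring

theorem length_eq (hl : IsPathFromTo l p q) :
    (l.length : ℤ) = q.1 - p.1 + (p.2 - q.2) + 1 := by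
  have := hl.fst_sub_snd_getElem (l.length - 1) (Nat.sub_one_lt_of_lt hl.length_pos)
  rw [hl.getElem_length_sub_one, Nat.cast_sub hl.length_pos] at this
  push_cast at this
  linarith

theorem le (hl : IsPathFromTo l p q) : p.1 ≤ q.1 ∧ q.2 ≤ p.2 := by
  have hlast := Nat.sub_one_lt_of_lt hl.length_pos
  have h₁ := hl.1.apply_getElem_le (fun _ _ h => h.fst_le) (Nat.zero_le _) hlast
  have h₂ := hl.1.apply_getElem_le (f := fun x => -x.2) (fun _ _ h => neg_le_neg h.snd_le)
    (Nat.zero_le _) hlast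
  simp only [hl.getElem_zero, hl.getElem_length_sub_one] at h₁ h₂
  exact ⟨h₁, neg_le_neg_iff.mp h₂⟩

theorem nodup (hl : IsPathFromTo l p q) : l.Nodup := by
  refine List.pairwise_iff_getElem.mpr fun i j hi hj hij heq => ?_
  have := congrArg (fun x : ℤ × ℤ => x.1 - x.2) heq
  simp only [hl.fst_sub_snd_getElem] at this
  omega

theorem cons {p' : ℤ × ℤ} (hs : Step p p') (hl : IsPathFromTo l p' q) :
    IsPathFromTo (p :: l) p q := by
  obtain ⟨hc, hh, hlast⟩ := hl
  obtain ⟨l, rfl⟩ := List.head?_eq_some_iff.mp hh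
  exact ⟨List.isChain_cons_cons.mpr ⟨hs, hc⟩, rfl, by rwa [List.getLast?_cons_cons]⟩

theorem exists_eq_cons (hl : IsPathFromTo l p q) (hpq : p ≠ q) :
    ∃ p' l', Step p p' ∧ l = p :: l' ∧ IsPathFromTo l' p' q := by
  obtain ⟨hc, hh, hlast⟩ := hl
  obtain ⟨_ | ⟨p', l'⟩, rfl⟩ := List.head?_eq_some_iff.mp hh
  · exact absurd (by simpa using hlast) hpq
  · obtain ⟨hs, hc'⟩ := List.isChain_cons_cons.mp hc
    exact ⟨p', p' :: l', hs, rfl, hc', rfl, by rwa [List.getLast?_cons_cons] at hlast⟩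

theorem eq_singleton (hl : IsPathFromTo l p p) : l = [p] := by
  have hlen := hl.length_eq
  obtain ⟨x, rfl⟩ := List.length_eq_one_iff.mp (by omega : l.length = 1)
  simpa using hl.getElem_zero

end IsPathFromTo

abbrev Paths (p q : ℤ × ℤ) : Type := {l : List (ℤ × ℤ) // IsPathFromTo l p q}

namespace Paths

theorem isEmpty {p q : ℤ × ℤ} (h : ¬(p.1 ≤ q.1 ∧ q.2 ≤ p.2)) : IsEmpty (Paths p q) :=
  ⟨fun l => h l.2.le⟩

instance (p : ℤ × ℤ) : Unique (Paths p p) where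
  default := ⟨[p], List.isChain_singleton _, rfl, rfl⟩
  uniq l := Subtype.ext l.2.eq_singleton

def cons (p q : ℤ × ℤ) : Paths (p + (1, 0)) q ⊕ Paths (p + (0, -1)) q → Paths p q :=
  Sum.elim (fun l => ⟨p :: l.1, l.2.cons (.inl rfl)⟩) (fun l => ⟨p :: l.1, l.2.cons (.inr rfl)⟩)

theorem cons_bijective {p q : ℤ × ℤ} (hpq : p ≠ q) : Function.Bijective (cons p q) := by
  refine ⟨?_, fun l => ?_⟩
  · have head_ne (u : Paths (p + (1, 0)) q) (v : Paths (p + (0, -1)) q) : u.1 ≠ v.1 := by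
      intro huv
      have := u.2.getElem_zero
      simp_rw [huv, v.2.getElem_zero] at this
      simp at this
    rintro (u | u) (v | v) huv <;> simp only [cons, Sum.elim_inl, Sum.elim_inr,
      Subtype.mk.injEq, List.cons.injEq, true_and] at huv
    · exact congrArg Sum.inl (Subtype.ext huv)
    · exact absurd huv (head_ne u v)
    · exact absurd huv.symm (head_ne v u)
    · exact congrArg Sum.inr (Subtype.ext huv)
  · obtain ⟨p', l', hs, hl, hl'⟩ := l.2.exists_eq_cons hpq
    rcases hs with rfl | rfl
    · exact ⟨.inl ⟨l', hl'⟩, Subtype.ext hl.symm⟩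
    · exact ⟨.inr ⟨l', hl'⟩, Subtype.ext hl.symm⟩

theorem card_eq_add {p q : ℤ × ℤ} (hpq : p ≠ q) [Finite (Paths (p + (1, 0)) q)]
    [Finite (Paths (p + (0, -1)) q)] :
    Nat.card (Paths p q) = Nat.card (Paths (p + (1, 0)) q) + Nat.card (Paths (p + (0, -1)) q) := by
  rw [← Nat.card_sum, Nat.card_congr (Equiv.ofBijective _ (cons_bijective hpq))]

theorem finite_of_le (n : ℕ) :
    ∀ p q : ℤ × ℤ, q.1 - p.1 + (p.2 - q.2) ≤ n → Finite (Paths p q) := by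
  induction n with
  | zero =>
    intro p q hn
    by_cases hpq : p = q
    · subst hpq
      infer_instance
    · have : IsEmpty (Paths p q) := isEmpty fun h => hpq (Prod.ext (by omega) (by omega))
      infer_instance
  | succ n ih =>
    intro p q hn
    by_cases hpq : p = q
    · subst hpq
      infer_instance
    · have := ih (p + (1, 0)) q (by simp; omega)
      have := ih (p + (0, -1)) q (by simp; omega)
      exact Finite.of_surjective _ (cons_bijective hpq).2

instance (p q : ℤ × ℤ) : Finite (Paths p q) :=
  finite_of_le _ p q (Int.self_le_toNat _)

theorem card_eq_choose (x y : ℤ) (m k : ℕ) :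
    Nat.card (Paths (x, y) (x + m, y - k)) = (m + k).choose m := by
  have hsplit {x y : ℤ} {q : ℤ × ℤ} (hq : (x, y) ≠ q) :
      Nat.card (Paths (x, y) q) =
        Nat.card (Paths (x + 1, y) q) + Nat.card (Paths (x, y - 1) q) := by
    simpa [← sub_eq_add_neg] using card_eq_add hq
  have hempty {p q : ℤ × ℤ} (h : ¬(p.1 ≤ q.1 ∧ q.2 ≤ p.2)) : Nat.card (Paths p q) = 0 :=
    have := isEmpty h
    Nat.card_of_isEmpty
  have hy (y : ℤ) (k : ℕ) : y - ((k + 1 : ℕ) : ℤ) = y - 1 - k := by push_cast; ring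
  induction m generalizing x y k with
  | zero =>
    induction k generalizing y with
    | zero => simp
    | succ k ih =>
      rw [hsplit (by simp; omega), hempty (by simp), hy, ih]
      simp
  | succ m ihm =>
    have hx : x + ((m + 1 : ℕ) : ℤ) = x + 1 + m := by push_cast; ring
    induction k generalizing y with
    | zero =>
      rw [hsplit (by simp; omega), hempty (p := (x, y - 1)) (by simp), hx, ihm]
      simp
    | succ k ihk =>
      rw [hsplit (by simp; omega), hx, ihm, ← hx, hy, ihk,
        show m + 1 + (k + 1) = m + (k + 1) + 1 by ring, Nat.choose_succ_succ',
        add_right_comm m 1 k, add_assoc]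

end Paths

theorem exists_eq_zero_of_sub_one_le (f : ℕ → ℤ) (K : ℕ) (h₀ : 0 ≤ f 0) (hK : f K ≤ 0)
    (hstep : ∀ k < K, f k - 1 ≤ f (k + 1)) : ∃ k ≤ K, f k = 0 := by
  induction K with
  | zero => exact ⟨0, le_rfl, le_antisymm hK h₀⟩
  | succ K ih =>
    by_cases hfK : f K ≤ 0
    · obtain ⟨k, hk, hfk⟩ := ih hfK fun k hk => hstep k (by omega)
      exact ⟨k, by omega, hfk⟩
    · exact ⟨K + 1, le_rfl, by linarith [hstep K (by omega)]⟩

namespace IsPathFromTo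

theorem exists_mem_mem {P Q : List (ℤ × ℤ)} {p p' q q' : ℤ × ℤ} (hP : IsPathFromTo P p p')
    (hQ : IsPathFromTo Q q q') (h₁ : p.1 = q.1) (h₂ : p'.1 = q'.1) (hpq : p.2 ≤ q.2)
    (hpq' : q'.2 ≤ p'.2) : ∃ z ∈ P, z ∈ Q := by
  -- `P[k]` and `Q[k + d]` lie on the same antidiagonal; their horizontal gap changes sign.
  obtain ⟨d, hd⟩ : ∃ d : ℕ, (d : ℤ) = q.2 - p.2 := ⟨(q.2 - p.2).toNat, by omega⟩
  have hPl := hP.length_eq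
  have hQl := hQ.length_eq
  set K := P.length - 1
  have hK : K < P.length := Nat.sub_one_lt_of_lt hP.length_pos
  have hKd : ∀ k ≤ K, k + d < Q.length := fun k hk => by omega
  set f : ℕ → ℤ := fun k => (Q.getD (k + d) 0).1 - (P.getD k 0).1
  have hf : ∀ k (hk : k ≤ K), f k = (Q[k + d]'(hKd k hk)).1 - (P[k]'(by omega)).1 := by
    intro k hk
    simp only [f, List.getD_eq_getElem _ _ (hKd k hk), List.getD_eq_getElem _ _ (hk.trans_lt hK)]
  have h₀ : 0 ≤ f 0 := by
    have := hQ.1.apply_getElem_le (fun _ _ h => h.fst_le) (Nat.zero_le d)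
      (by simpa using hKd 0 (Nat.zero_le _))
    simp only [hQ.getElem_zero] at this
    simp only [hf 0 (Nat.zero_le _), hP.getElem_zero, zero_add]
    omega
  have hfK : f K ≤ 0 := by
    have := hQ.1.apply_getElem_le (fun _ _ h => h.fst_le) (Nat.le_sub_one_of_lt (hKd K le_rfl))
      (Nat.sub_one_lt_of_lt hQ.length_pos)
    rw [hQ.getElem_length_sub_one] at this
    rw [hf K le_rfl, hP.getElem_length_sub_one]
    omega
  have hstep : ∀ k < K, f k - 1 ≤ f (k + 1) := by
    intro k hk
    have hQk := hQ.1.apply_getElem_le (fun _ _ h => h.fst_le) (Nat.le_succ (k + d))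
      (by have := hKd (k + 1) hk; omega)
    have hPk := (hP.1.getElem k (by omega)).fst_le_add_one
    simp only [Nat.succ_eq_add_one] at hQk
    simp only [hf k hk.le, hf (k + 1) hk, Nat.add_right_comm k 1 d]
    omega
  obtain ⟨k, hk, hfk⟩ := exists_eq_zero_of_sub_one_le f K h₀ hfK hstep
  have hPk := hP.fst_sub_snd_getElem k (by omega)
  have hQk := hQ.fst_sub_snd_getElem (k + d) (hKd k hk)
  rw [hf k hk] at hfk
  refine ⟨P[k], List.getElem_mem _, ?_⟩
  rw [show P[k] = Q[k + d] from Prod.ext (by omega) (by push_cast at hPk hQk; omega)]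
  exact List.getElem_mem _

end IsPathFromTo

namespace List

variable {α : Type*}

theorem exists_eq_append_cons_notMem {x : α} {u : List α} (h : x ∈ u) :
    ∃ u₁ u₂, u = u₁ ++ x :: u₂ ∧ x ∉ u₁ := by
  induction u with
  | nil => simp at h
  | cons y u ih =>
    by_cases hy : y = x
    · exact ⟨[], u, by rw [hy, nil_append], not_mem_nil⟩
    · obtain ⟨u₁, u₂, rfl, hx⟩ := ih (by simpa [Ne.symm hy] using h)
      exact ⟨y :: u₁, u₂, rfl, by simp [Ne.symm hy, hx]⟩

variable [DecidableEq α]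

def spliceAt (x : α) (u v : List α) : List α :=
  u.take (u.idxOf x + 1) ++ v.drop (v.idxOf x + 1)

theorem spliceAt_self (x : α) (u : List α) : u.spliceAt x u = u :=
  take_append_drop _ _

theorem spliceAt_append_cons {x : α} {u₁ u₂ v₁ v₂ : List α} (hu : x ∉ u₁) (hv : x ∉ v₁) :
    (u₁ ++ x :: u₂).spliceAt x (v₁ ++ x :: v₂) = u₁ ++ x :: v₂ := by
  simp [spliceAt, idxOf_append_of_notMem hu, idxOf_append_of_notMem hv, take_append]

theorem mem_spliceAt_self {x : α} {u : List α} (hx : x ∈ u) (v : List α) : x ∈ u.spliceAt x v := by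
  obtain ⟨u₁, u₂, rfl, hu₁⟩ := exists_eq_append_cons_notMem hx
  simp [spliceAt, idxOf_append_of_notMem hu₁, take_append]

theorem mem_or_mem_of_mem_spliceAt {x y : α} {u v : List α} (hy : y ∈ u.spliceAt x v) :
    y ∈ u ∨ y ∈ v :=
  (mem_append.mp hy).imp mem_of_mem_take mem_of_mem_drop

theorem spliceAt_spliceAt {x : α} {u v : List α} (hu : x ∈ u) (hv : x ∈ v) :
    (u.spliceAt x v).spliceAt x (v.spliceAt x u) = u := by
  obtain ⟨u₁, u₂, rfl, hu₁⟩ := exists_eq_append_cons_notMem hu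
  obtain ⟨v₁, v₂, rfl, hv₁⟩ := exists_eq_append_cons_notMem hv
  simp only [spliceAt_append_cons hu₁ hv₁, spliceAt_append_cons hv₁ hu₁]

theorem IsChain.spliceAt {R : α → α → Prop} {x : α} {u v : List α} (hu : u.IsChain R)
    (hv : v.IsChain R) (hxu : x ∈ u) (hxv : x ∈ v) : (u.spliceAt x v).IsChain R := by
  obtain ⟨u₁, u₂, rfl, hu₁⟩ := exists_eq_append_cons_notMem hxu
  obtain ⟨v₁, v₂, rfl, hv₁⟩ := exists_eq_append_cons_notMem hxv
  rw [spliceAt_append_cons hu₁ hv₁]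
  exact isChain_split.mpr ⟨(isChain_split.mp hu).1, (isChain_split.mp hv).2⟩

end List

theorem IsPathFromTo.spliceAt {u v : List (ℤ × ℤ)} {p q p' q' x : ℤ × ℤ}
    (hu : IsPathFromTo u p q) (hv : IsPathFromTo v p' q') (hxu : x ∈ u) (hxv : x ∈ v) :
    IsPathFromTo (u.spliceAt x v) p q' := by
  refine ⟨hu.1.spliceAt hv.1 hxu hxv, ?_, ?_⟩ <;>
  obtain ⟨u₁, u₂, rfl, hu₁⟩ := List.exists_eq_append_cons_notMem hxu <;>
  obtain ⟨v₁, v₂, rfl, hv₁⟩ := List.exists_eq_append_cons_notMem hxv <;>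
  rw [List.spliceAt_append_cons hu₁ hv₁]
  · rw [← hu.2.1]
    simp
  · rw [← hv.2.2]
    simp [List.getLast?_cons]

namespace LGV

open Equiv List

section ListFamily

variable {ι α : Type*}

def OnOther (l : ι → List α) (i : ι) (x : α) : Prop := ∃ j ≠ i, x ∈ l j

def SharesPoint (l : ι → List α) (i : ι) : Prop := ∃ x ∈ l i, OnOther l i x

def HasSharedPoint (l : ι → List α) : Prop := ∃ i, SharesPoint l i

theorem not_hasSharedPoint_iff {l : ι → List α} :
    ¬HasSharedPoint l ↔ ∀ i j, i ≠ j → ∀ x, x ∈ l i → x ∉ l j := by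
  simp only [HasSharedPoint, SharesPoint, OnOther]
  grind

variable [LinearOrder ι] [WellFoundedLT ι] {l : ι → List α} (h : HasSharedPoint l)

noncomputable def firstSharing : ι := wellFounded_lt.min {i | SharesPoint l i} h

theorem sharesPoint_firstSharing : SharesPoint l (firstSharing h) :=
  WellFounded.min_mem _ {i | SharesPoint l i} h

theorem firstSharing_le {i : ι} (hi : SharesPoint l i) : firstSharing h ≤ i :=
  WellFounded.min_le _ (s := {i | SharesPoint l i}) hi

open Classical in
noncomputable def firstSharedPoint : α :=
  ((l (firstSharing h)).find? (OnOther l (firstSharing h) ·)).get <| by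
    simpa [SharesPoint] using sharesPoint_firstSharing h

open Classical in
theorem find?_eq_some_firstSharedPoint :
    (l (firstSharing h)).find? (OnOther l (firstSharing h) ·) = some (firstSharedPoint h) :=
  (Option.some_get _).symm

theorem firstSharedPoint_spec : OnOther l (firstSharing h) (firstSharedPoint h) ∧
    ∃ as bs, l (firstSharing h) = as ++ firstSharedPoint h :: bs ∧
      ∀ a ∈ as, ¬OnOther l (firstSharing h) a := by
  classical
  simpa using List.find?_eq_some_iff_append.mp (find?_eq_some_firstSharedPoint h)

theorem firstSharedPoint_mem : firstSharedPoint h ∈ l (firstSharing h) := by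
  obtain ⟨-, as, bs, hl, -⟩ := firstSharedPoint_spec h
  simp [hl]

theorem firstSharedPoint_eq_of {i : ι} (hi : firstSharing h = i) {x : α} {as bs : List α}
    (hl : l i = as ++ x :: bs) (hx : OnOther l i x) (has : ∀ a ∈ as, ¬OnOther l i a) :
    firstSharedPoint h = x := by
  classical
  subst hi
  have := (List.find?_eq_some_iff_append (p := (OnOther l (firstSharing h) ·))).mpr
    ⟨by simpa using hx, as, bs, hl, by simpa using has⟩
  rw [find?_eq_some_firstSharedPoint] at this
  exact Option.some_injective _ this

noncomputable def partner : ι :=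
  wellFounded_lt.min {j | j ≠ firstSharing h ∧ firstSharedPoint h ∈ l j}
    (firstSharedPoint_spec h).1

theorem partner_spec : partner h ≠ firstSharing h ∧ firstSharedPoint h ∈ l (partner h) :=
  WellFounded.min_mem _ {j | j ≠ firstSharing h ∧ firstSharedPoint h ∈ l j} _

theorem partner_le {j : ι} (hj : j ≠ firstSharing h) (hx : firstSharedPoint h ∈ l j) :
    partner h ≤ j :=
  WellFounded.min_le _ (s := {j | j ≠ firstSharing h ∧ firstSharedPoint h ∈ l j}) ⟨hj, hx⟩

theorem partner_eq_of {i : ι} (hi : firstSharing h = i) {x : α} (hx : firstSharedPoint h = x)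
    {j : ι} (hj : j ≠ i) (hxj : x ∈ l j) (hmin : ∀ j' < j, j' ≠ i → x ∉ l j') :
    partner h = j := by
  subst hi hx
  exact le_antisymm (partner_le h hj hxj)
    (not_lt.mp fun hlt => hmin _ hlt (partner_spec h).1 (partner_spec h).2)

theorem firstSharing_lt_partner : firstSharing h < partner h :=
  lt_of_le_of_ne
    (firstSharing_le h ⟨_, (partner_spec h).2, _, (partner_spec h).1.symm, firstSharedPoint_mem h⟩)
    (partner_spec h).1.symm

theorem mem_or_swap_apply_eq (k : ι) :
    (firstSharedPoint h ∈ l k ∧ firstSharedPoint h ∈ l (swap (firstSharing h) (partner h) k)) ∨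
      swap (firstSharing h) (partner h) k = k := by
  by_cases hi : k = firstSharing h
  · subst hi
    exact .inl ⟨firstSharedPoint_mem h, by rw [swap_apply_left]; exact (partner_spec h).2⟩
  by_cases hj : k = partner h
  · subst hj
    exact .inl ⟨(partner_spec h).2, by rw [swap_apply_right]; exact firstSharedPoint_mem h⟩
  exact .inr (swap_apply_of_ne_of_ne hi hj)

variable [DecidableEq α]

/-- Exchanges the tails of `l (firstSharing h)` and `l (partner h)` after `firstSharedPoint h`;
every other list is left alone because `u.spliceAt x u = u`. -/
noncomputable def swapTails : ι → List α := fun k =>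
  (l k).spliceAt (firstSharedPoint h) (l (swap (firstSharing h) (partner h) k))

theorem swapTails_of_ne {k : ι} (hi : k ≠ firstSharing h) (hj : k ≠ partner h) :
    swapTails h k = l k := by
  rw [swapTails, swap_apply_of_ne_of_ne hi hj, spliceAt_self]

theorem mem_of_mem_swapTails {k : ι} {y : α} (hy : y ∈ swapTails h k) :
    y ∈ l k ∨ y ∈ l (swap (firstSharing h) (partner h) k) :=
  mem_or_mem_of_mem_spliceAt hy

theorem firstSharedPoint_mem_swapTails_firstSharing :
    firstSharedPoint h ∈ swapTails h (firstSharing h) :=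
  mem_spliceAt_self (firstSharedPoint_mem h) _

theorem firstSharedPoint_mem_swapTails_partner : firstSharedPoint h ∈ swapTails h (partner h) :=
  mem_spliceAt_self (partner_spec h).2 _

theorem hasSharedPoint_swapTails : HasSharedPoint (swapTails h) :=
  ⟨firstSharing h, _, firstSharedPoint_mem_swapTails_firstSharing h, partner h,
    (partner_spec h).1, firstSharedPoint_mem_swapTails_partner h⟩

theorem firstSharing_swapTails :
    firstSharing (hasSharedPoint_swapTails h) = firstSharing h := by
  refine le_antisymm (firstSharing_le _ ⟨_, firstSharedPoint_mem_swapTails_firstSharing h,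
    partner h, (partner_spec h).1, firstSharedPoint_mem_swapTails_partner h⟩) (not_lt.mp ?_)
  set i := firstSharing (hasSharedPoint_swapTails h)
  intro hlt
  have hi : i ≠ firstSharing h := hlt.ne
  have hj : i ≠ partner h := (hlt.trans (firstSharing_lt_partner h)).ne
  obtain ⟨y, hy, j, hji, hyj⟩ := sharesPoint_firstSharing (hasSharedPoint_swapTails h)
  rw [swapTails_of_ne h hi hj] at hy
  have : SharesPoint l i := by
    rcases mem_of_mem_swapTails h hyj with hyj | hyj
    · exact ⟨y, hy, j, hji, hyj⟩
    · refine ⟨y, hy, _, fun hsw => hji ?_, hyj⟩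
      rwa [swap_apply_eq_iff, swap_apply_of_ne_of_ne hi hj] at hsw
  exact absurd (firstSharing_le h this) (not_le.mpr hlt)

theorem firstSharedPoint_swapTails (hnd : (l (firstSharing h)).Nodup) :
    firstSharedPoint (hasSharedPoint_swapTails h) = firstSharedPoint h := by
  set x := firstSharedPoint h
  obtain ⟨hx, as, bs, hl, has⟩ := firstSharedPoint_spec h
  obtain ⟨cs, ds, hl', hcs⟩ := exists_eq_append_cons_notMem (partner_spec h).2
  have hxas : x ∉ as := fun hm => has x hm hx
  have hi : swapTails h (firstSharing h) = as ++ x :: ds := by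
    rw [swapTails, swap_apply_left, hl, hl', spliceAt_append_cons hxas hcs]
  have hj : swapTails h (partner h) = cs ++ x :: bs := by
    rw [swapTails, swap_apply_right, hl, hl', spliceAt_append_cons hcs hxas]
  refine firstSharedPoint_eq_of _ (firstSharing_swapTails h) hi
    ⟨partner h, (partner_spec h).1, firstSharedPoint_mem_swapTails_partner h⟩ ?_
  rintro a ha ⟨j, hji, haj⟩
  by_cases hjp : j = partner h
  · subst hjp
    rw [hj] at haj
    rcases mem_append.mp haj with hac | hab
    · exact has a ha ⟨_, hji, by rw [hl']; exact mem_append_left _ hac⟩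
    · rw [hl] at hnd
      exact (nodup_append.mp hnd).2.2 a ha a hab rfl
  · rw [swapTails_of_ne h hji hjp] at haj
    exact has a ha ⟨j, hji, haj⟩

theorem partner_swapTails (hnd : (l (firstSharing h)).Nodup) :
    partner (hasSharedPoint_swapTails h) = partner h := by
  refine partner_eq_of _ (firstSharing_swapTails h) (firstSharedPoint_swapTails h hnd)
    (partner_spec h).1 (firstSharedPoint_mem_swapTails_partner h) fun j hj hji hxj => ?_
  rw [swapTails_of_ne h hji hj.ne] at hxj
  exact absurd (partner_le h hji hxj) (not_le.mpr hj)

theorem swapTails_swapTails (hnd : ∀ k, (l k).Nodup) :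
    swapTails (hasSharedPoint_swapTails h) = l := by
  funext k
  rw [swapTails, firstSharedPoint_swapTails h (hnd _), firstSharing_swapTails,
    partner_swapTails h (hnd _)]
  rcases mem_or_swap_apply_eq h k with ⟨hk, hτk⟩ | hk
  · rw [swapTails, swapTails, swap_apply_self, spliceAt_spliceAt hk hτk]
  · rw [hk, swapTails, hk, spliceAt_self, spliceAt_self]

end ListFamily

theorem card_subtype_eq_add {α : Type*} (p q : α → Prop) [Finite {a // p a}] :
    Nat.card {a // p a} = Nat.card {a // p a ∧ q a} + Nat.card {a // p a ∧ ¬q a} := by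
  classical
  rw [← Nat.card_congr (Equiv.sumCompl fun a : {a // p a} => q a), Nat.card_sum,
    Nat.card_congr (subtypeSubtypeEquivSubtypeInter p q),
    Nat.card_congr (subtypeSubtypeEquivSubtypeInter p (¬q ·))]

open Equiv.Perm (sign)

variable {ι : Type*} [Fintype ι]

theorem card_pathSystems (A B : ι → ℤ × ℤ) :
    Nat.card {l : ι → List (ℤ × ℤ) // ∀ i, IsPathFromTo (l i) (A i) (B i)} =
      ∏ i, Nat.card (Paths (A i) (B i)) := by
  rw [Nat.card_congr (subtypePiEquivPi (p := fun i u => IsPathFromTo u (A i) (B i))), Nat.card_pi]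

instance (A B : ι → ℤ × ℤ) :
    Finite {l : ι → List (ℤ × ℤ) // ∀ i, IsPathFromTo (l i) (A i) (B i)} :=
  .of_equiv _ (subtypePiEquivPi (p := fun i u => IsPathFromTo u (A i) (B i))).symm

instance (A B : ι → ℤ × ℤ) (P : (ι → List (ℤ × ℤ)) → Prop) :
    Finite {l : ι → List (ℤ × ℤ) // (∀ i, IsPathFromTo (l i) (A i) (B i)) ∧ P l} :=
  .of_injective (fun l => (⟨l.1, l.2.1⟩ : {l // ∀ i, IsPathFromTo (l i) (A i) (B i)}))
    fun _ _ h => Subtype.ext (by simpa using congrArg Subtype.val h)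

variable [LinearOrder ι]

theorem isPathFromTo_swapTails {A B : ι → ℤ × ℤ} {σ : Perm ι} {l : ι → List (ℤ × ℤ)}
    (hl : ∀ k, IsPathFromTo (l k) (A k) (B (σ k))) (h : HasSharedPoint l) (k : ι) :
    IsPathFromTo (swapTails h k) (A k) (B ((σ * swap (firstSharing h) (partner h)) k)) := by
  rcases mem_or_swap_apply_eq h k with ⟨hk, hτk⟩ | hk
  · exact (hl k).spliceAt (hl _) hk hτk
  · rw [Perm.mul_apply, hk, swapTails, hk, spliceAt_self]
    exact hl k

abbrev MeetingSystems (A B : ι → ℤ × ℤ) :=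
  Σ σ : Perm ι, {l : ι → List (ℤ × ℤ) //
    (∀ i, IsPathFromTo (l i) (A i) (B (σ i))) ∧ HasSharedPoint l}

namespace MeetingSystems

variable {A B : ι → ℤ × ℤ}

noncomputable def swapTails (x : MeetingSystems A B) : MeetingSystems A B :=
  ⟨x.1 * swap (firstSharing x.2.2.2) (partner x.2.2.2), LGV.swapTails x.2.2.2,
    isPathFromTo_swapTails x.2.2.1 x.2.2.2, hasSharedPoint_swapTails x.2.2.2⟩

theorem sign_swapTails (x : MeetingSystems A B) : sign x.swapTails.1 = -sign x.1 := by
  simp only [swapTails, Perm.sign_mul, Perm.sign_swap (firstSharing_lt_partner x.2.2.2).ne,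
    mul_neg_one]

theorem swapTails_swapTails (x : MeetingSystems A B) : x.swapTails.swapTails = x := by
  have hnd k := (x.2.2.1 k).nodup
  refine Sigma.subtype_ext ?_ (LGV.swapTails_swapTails x.2.2.2 hnd)
  simp only [swapTails, firstSharing_swapTails, partner_swapTails x.2.2.2 (hnd _), mul_assoc,
    swap_mul_self, mul_one]

end MeetingSystems

theorem sum_sign_mul_card_meeting_eq_zero (A B : ι → ℤ × ℤ) :
    ∑ σ : Perm ι, (sign σ : ℤ) * Nat.card {l : ι → List (ℤ × ℤ) //
      (∀ i, IsPathFromTo (l i) (A i) (B (σ i))) ∧ HasSharedPoint l} = 0 := by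
  classical
  let (σ : Perm ι) : Fintype {l : ι → List (ℤ × ℤ) //
      (∀ i, IsPathFromTo (l i) (A i) (B (σ i))) ∧ HasSharedPoint l} := .ofFinite _
  calc _ = ∑ x : MeetingSystems A B, (sign x.1 : ℤ) := by
        simp [Fintype.sum_sigma, Nat.card_eq_fintype_card, mul_comm]
    _ = 0 := by
      refine Finset.sum_involution (fun x _ => x.swapTails) (fun x _ => ?_) (fun x _ _ hx => ?_)
        (fun _ _ => Finset.mem_univ _) (fun x _ => x.swapTails_swapTails)
      · simp [MeetingSystems.sign_swapTails]
      · have := congrArg (fun y : MeetingSystems A B => sign y.1) hx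
        simp only [MeetingSystems.sign_swapTails] at this
        exact units_ne_neg_self _ this.symm

theorem det_card_paths (A B : ι → ℤ × ℤ) :
    (Matrix.of fun i j => (Nat.card (Paths (A i) (B j)) : ℤ)).det =
      ∑ σ : Perm ι, (sign σ : ℤ) * Nat.card {l : ι → List (ℤ × ℤ) //
        (∀ i, IsPathFromTo (l i) (A i) (B (σ i))) ∧ ∀ i j, i ≠ j → ∀ x, x ∈ l i → x ∉ l j} := by
  have hsplit (σ : Perm ι) : (∏ i, Nat.card (Paths (A i) (B (σ i))) : ℤ) =
      Nat.card {l : ι → List (ℤ × ℤ) // (∀ i, IsPathFromTo (l i) (A i) (B (σ i))) ∧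
        ∀ i j, i ≠ j → ∀ x, x ∈ l i → x ∉ l j} +
      Nat.card {l : ι → List (ℤ × ℤ) //
        (∀ i, IsPathFromTo (l i) (A i) (B (σ i))) ∧ HasSharedPoint l} := by
    rw [← Nat.cast_prod, ← card_pathSystems, card_subtype_eq_add _ HasSharedPoint, add_comm]
    simp [not_hasSharedPoint_iff]
  rw [← Matrix.det_transpose, Matrix.det_apply']
  simp only [Matrix.transpose_apply, Matrix.of_apply, Int.cast_id, hsplit, mul_add,
    Finset.sum_add_distrib, sum_sign_mul_card_meeting_eq_zero, add_zero]

section NonPermutable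

variable {A B : ι → ℤ × ℤ}

def IsNonPermutable (A B : ι → ℤ × ℤ) : Prop :=
  ∀ ⦃i j i' j'⦄, i < j → j' < i' → ∀ ⦃P Q⦄, IsPathFromTo P (A i) (B i') →
    IsPathFromTo Q (A j) (B j') → ∃ z ∈ P, z ∈ Q

theorem IsNonPermutable.eq_one {σ : Perm ι} (hAB : IsNonPermutable A B)
    {l : ι → List (ℤ × ℤ)} (hl : ∀ i, IsPathFromTo (l i) (A i) (B (σ i)))
    (hd : ∀ i j, i ≠ j → ∀ x, x ∈ l i → x ∉ l j) : σ = 1 := by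
  have hσ : StrictMono σ := fun i j hij => by
    refine lt_of_le_of_ne (not_lt.mp fun hlt => ?_) (σ.injective.ne hij.ne)
    obtain ⟨z, hzi, hzj⟩ := hAB hij hlt (hl i) (hl j)
    exact hd i j hij.ne z hzi hzj
  exact Equiv.ext (congrFun ((hσ.range_inj strictMono_id).mp (by simp)))

theorem IsNonPermutable.det_card_paths (hAB : IsNonPermutable A B) :
    (Matrix.of fun i j => (Nat.card (Paths (A i) (B j)) : ℤ)).det =
      Nat.card {l : ι → List (ℤ × ℤ) //
        (∀ i, IsPathFromTo (l i) (A i) (B i)) ∧ ∀ i j, i ≠ j → ∀ x, x ∈ l i → x ∉ l j} := by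
  rw [LGV.det_card_paths, Finset.sum_eq_single 1 (fun σ _ hσ => ?_) (by simp)]
  · simp
  · have : IsEmpty {l : ι → List (ℤ × ℤ) // (∀ i, IsPathFromTo (l i) (A i) (B (σ i))) ∧
        ∀ i j, i ≠ j → ∀ x, x ∈ l i → x ∉ l j} := ⟨fun l => hσ (hAB.eq_one l.2.1 l.2.2)⟩
    rw [Nat.card_of_isEmpty, Nat.cast_zero, mul_zero]

end NonPermutable

end LGV

theorem stmt_12_general (a b t : ℕ) (ha : 2 ≤ a)
    (h : Fin t → ℕ) (hmono : StrictMono h) (hh : ∀ i, 1 ≤ h i ∧ h i ≤ b) :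
    (Nat.card {l : Fin t → List (ℤ × ℤ) //
        (∀ i, IsPathFromTo (l i) (1, (b : ℤ) + (h i : ℤ)) ((a : ℤ), (h i : ℤ))) ∧
        (∀ i j, i ≠ j → ∀ x, x ∈ l i → x ∉ l j)} : ℤ) =
      Matrix.det (Matrix.of fun i j : Fin t =>
        (Nat.choose (a + b - h j + h i - 1) (a - 1) : ℤ)) := by
  have hentry (i j : Fin t) : Nat.choose (a + b - h j + h i - 1) (a - 1) =
      Nat.card (Paths (1, (b : ℤ) + h i) (a, h j)) := by
    have hj := (hh j).2
    have hend : ((a : ℤ), (h j : ℤ)) =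
        (1 + ((a - 1 : ℕ) : ℤ), (b + h i : ℤ) - ((b + h i - h j : ℕ) : ℤ)) := by
      push_cast [Nat.cast_sub (by omega : 1 ≤ a), Nat.cast_sub (by omega : h j ≤ b + h i)]
      ring_nf
    rw [hend, Paths.card_eq_choose]
    congr 1
    omega
  have hAB : LGV.IsNonPermutable (fun i => (1, (b : ℤ) + h i)) (fun i => (a, (h i : ℤ))) :=
    fun i j i' j' hij hji' P Q hP hQ => hP.exists_mem_mem hQ rfl rfl
      (by simpa using (hmono hij).le) (by simpa using (hmono hji').le)
  simp only [hentry]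
  exact hAB.det_card_paths.symm

theorem stmt_12 (a b t : ℕ) (ha : 2 ≤ a) (hab : a ≤ b) (hta : t ≤ a - 1)
    (h : Fin t → ℕ) (hmono : StrictMono h) (hh : ∀ i, 1 ≤ h i ∧ h i ≤ b) :
    (Nat.card {l : Fin t → List (ℤ × ℤ) //
        (∀ i, IsPathFromTo (l i) (1, (b : ℤ) + (h i : ℤ)) ((a : ℤ), (h i : ℤ))) ∧
        (∀ i j, i ≠ j → ∀ x, x ∈ l i → x ∉ l j)} : ℤ) =
      Matrix.det (Matrix.of fun i j : Fin t =>
        (Nat.choose (a + b - h j + h i - 1) (a - 1) : ℤ)) :=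
  stmt_12_general a b t ha h hmono hh
end
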